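/- Let f : (ℝ³)³ → ℝ⁵ be f(a₁,a₂,a₃) = (⟨a₁,a₂⟩, ⟨a₂,a₃⟩, ⟨a₃,a₁⟩, ‖a₁‖²−‖a₂‖², ‖a₂‖²−‖a₃‖²) and Φ(a₁,a₂,a₃) = ⟨a₁, a₂ × a₃⟩. For every η ∈ (ℝ³)³ with Φ(η) ≠ 0, the closure in (ℝ³)³ of the set N_η = {a : f(a) = f(η), sign Φ(a) = sign Φ(η)} contains a point μ with Φ(μ) = 0. In other words, the boundary closure(N_η) \ N_η of every leaf is nonempty. -/

import Mathlib

open scoped RealInnerProductSpace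

noncomputable section

/-- `ℝ³` with the standard (Euclidean) inner product. -/
abbrev E3 : Type := EuclideanSpace ℝ (Fin 3)

/-- The cross product on `ℝ³`. -/
def cross (u v : E3) : E3 :=
  (WithLp.equiv 2 (Fin 3 → ℝ)).symm
    (crossProduct ((WithLp.equiv 2 (Fin 3 → ℝ)) u) ((WithLp.equiv 2 (Fin 3 → ℝ)) v))

/-- `Φ(a₁,a₂,a₃) = ⟨a₁, a₂ × a₃⟩`. -/
def Phi (a : E3 × E3 × E3) : ℝ := ⟪a.1, cross a.2.1 a.2.2⟫

/-- The five Casimir functions collected into a map `(ℝ³)³ → ℝ⁵`. -/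
def casimir (a : E3 × E3 × E3) : Fin 5 → ℝ :=
  ![⟪a.1, a.2.1⟫, ⟪a.2.1, a.2.2⟫, ⟪a.2.2, a.1⟫,
    ‖a.1‖ ^ 2 - ‖a.2.1‖ ^ 2, ‖a.2.1‖ ^ 2 - ‖a.2.2‖ ^ 2]

/-- The vector field `V₀(a) = (a₂×a₃, a₃×a₁, a₁×a₂)`. -/
def V0 (a : E3 × E3 × E3) : E3 × E3 × E3 :=
  (cross a.2.1 a.2.2, cross a.2.2 a.1, cross a.1 a.2.1)

/-- The vector field `V₁(a) = (0, a₂×a₁, a₃×a₁)`. -/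
def V1 (a : E3 × E3 × E3) : E3 × E3 × E3 :=
  (0, cross a.2.1 a.1, cross a.2.2 a.1)

/-- The vector field `V₂(a) = (a₁×a₂, 0, a₃×a₂)`. -/
def V2 (a : E3 × E3 × E3) : E3 × E3 × E3 :=
  (cross a.1 a.2.1, 0, cross a.2.2 a.2.1)

/-- The vector field `V₃(a) = (a₁×a₃, a₂×a₃, 0)`. -/
def V3 (a : E3 × E3 × E3) : E3 × E3 × E3 :=
  (cross a.1 a.2.2, cross a.2.1 a.2.2, 0)


/-- The leaf through `η`: the Casimir level set of `η` intersected with the set where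
`Φ` has the same sign as `Φ(η)`. -/
def leaf (η : E3 × E3 × E3) : Set (E3 × E3 × E3) :=
  {a | casimir a = casimir η ∧ Real.sign (Phi a) = Real.sign (Phi η)}

section Aux

lemma inner_eq3 (u v : E3) : ⟪u,v⟫ = u 0 * v 0 + u 1 * v 1 + u 2 * v 2 := by
  simp [PiLp.inner_apply, RCLike.inner_apply, Fin.sum_univ_three]
  ring

lemma phi_eq (a : E3 × E3 × E3) : Phi a =
    a.1 0 * (a.2.1 1 * a.2.2 2 - a.2.1 2 * a.2.2 1)
  + a.1 1 * (a.2.1 2 * a.2.2 0 - a.2.1 0 * a.2.2 2)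
  + a.1 2 * (a.2.1 0 * a.2.2 1 - a.2.1 1 * a.2.2 0) := by
  simp only [Phi, cross, inner_eq3, crossProduct]
  simp only [WithLp.equiv_symm_apply, WithLp.equiv_apply, PiLp.toLp_apply, LinearMap.mk₂_apply,
    Matrix.cons_val_zero, Matrix.cons_val_one, Matrix.head_cons, Matrix.cons_val_two,
    Matrix.tail_cons]

lemma continuous_phi : Continuous Phi := by
  have h : ∀ i : Fin 3, Continuous (fun v : E3 => v i) :=
    fun i => (continuous_apply i).comp (PiLp.continuous_ofLp 2 (fun _ : Fin 3 => ℝ))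
  have he : Phi = fun a : E3 × E3 × E3 =>
      a.1 0 * (a.2.1 1 * a.2.2 2 - a.2.1 2 * a.2.2 1)
    + a.1 1 * (a.2.1 2 * a.2.2 0 - a.2.1 0 * a.2.2 2)
    + a.1 2 * (a.2.1 0 * a.2.2 1 - a.2.1 1 * a.2.2 0) := funext phi_eq
  rw [he]
  have h1 : Continuous (fun a : E3 × E3 × E3 => a.1) := continuous_fst
  have h2 : Continuous (fun a : E3 × E3 × E3 => a.2.1) := continuous_snd.fst
  have h3 : Continuous (fun a : E3 × E3 × E3 => a.2.2) := continuous_snd.snd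
  fun_prop

lemma phi_sq (a : E3 × E3 × E3) : Phi a ^ 2 =
    ⟪a.1,a.1⟫ * (⟪a.2.1,a.2.1⟫ * ⟪a.2.2,a.2.2⟫ - ⟪a.2.1,a.2.2⟫^2)
  - ⟪a.1,a.2.1⟫ * (⟪a.1,a.2.1⟫ * ⟪a.2.2,a.2.2⟫ - ⟪a.2.1,a.2.2⟫ * ⟪a.2.2,a.1⟫)
  + ⟪a.2.2,a.1⟫ * (⟪a.1,a.2.1⟫ * ⟪a.2.1,a.2.2⟫ - ⟪a.2.1,a.2.1⟫ * ⟪a.2.2,a.1⟫) := by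
  simp only [phi_eq, inner_eq3]
  ring

lemma pos_left_of_pos_right {f : ℝ → ℝ} {a b : ℝ} (hab : a ≤ b)
    (hf : ContinuousOn f (Set.Icc a b)) (h0 : ∀ x ∈ Set.Icc a b, f x ≠ 0)
    (hb : 0 < f b) : 0 < f a := by
  rcases (h0 a ⟨le_refl a, hab⟩).lt_or_gt with ha | ha
  · exfalso
    have h00 : (0:ℝ) ∈ Set.Icc (f a) (f b) := ⟨ha.le, hb.le⟩
    obtain ⟨x, hx, hfx⟩ := intermediate_value_Icc hab hf h00
    exact h0 x hx hfx
  · exact ha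

lemma sign_eq_of_nonzero {f : ℝ → ℝ} {a b : ℝ} (hab : a ≤ b)
    (hf : ContinuousOn f (Set.Icc a b)) (h0 : ∀ x ∈ Set.Icc a b, f x ≠ 0) :
    Real.sign (f a) = Real.sign (f b) := by
  rcases (h0 b ⟨hab, le_refl b⟩).lt_or_gt with hb | hb
  · have ha : 0 < -f a := by
      have := pos_left_of_pos_right hab (hf.neg) (fun x hx => neg_ne_zero.2 (h0 x hx))
        (by simpa using hb)
      simpa using this
    rw [Real.sign_of_neg (by linarith), Real.sign_of_neg hb]
  · have ha : 0 < f a := pos_left_of_pos_right hab hf h0 hb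
    rw [Real.sign_of_pos ha, Real.sign_of_pos hb]

def g2f (t0 n2 t : ℝ) : ℝ := t + n2 - t0
def g3f (t0 n3 t : ℝ) : ℝ := t + n3 - t0
def f2f (t0 n2 p t : ℝ) : ℝ := t * g2f t0 n2 t - p^2
def Df (t0 n2 n3 p q r t : ℝ) : ℝ :=
  t * (g2f t0 n2 t * g3f t0 n3 t - q^2) - p * (p * g3f t0 n3 t - q*r)
    + r * (p*q - g2f t0 n2 t * r)

lemma continuous_f2f (t0 n2 p : ℝ) : Continuous (f2f t0 n2 p) := by
  unfold f2f g2f; fun_prop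

lemma continuous_Df (t0 n2 n3 p q r : ℝ) : Continuous (Df t0 n2 n3 p q r) := by
  unfold Df g2f g3f; fun_prop

end Aux

set_option maxHeartbeats 2000000 in
/-- The closure of every leaf contains a point where `Φ` vanishes; i.e. the boundary
`closure(N_η) \ N_η` is nonempty. -/
theorem leaf_closure_meets_phi_zero (η : E3 × E3 × E3) (hη : Phi η ≠ 0) :
    ∃ μ ∈ closure (leaf η), Phi μ = 0 := by
  classical
  -- basic notation
  set t0 : ℝ := ‖η.1‖^2 with ht0def
  set p : ℝ := ⟪η.1, η.2.1⟫ with hpdef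
  set q : ℝ := ⟪η.2.1, η.2.2⟫ with hqdef
  set r : ℝ := ⟪η.2.2, η.1⟫ with hrdef
  set n2 : ℝ := ‖η.2.1‖^2 with hn2def
  set n3 : ℝ := ‖η.2.2‖^2 with hn3def
  have h1ne : η.1 ≠ 0 := by
    intro h
    exact hη (by simp [Phi, h])
  have hnrm1 : ‖η.1‖ ≠ 0 := norm_ne_zero_iff.2 h1ne
  have ht0 : 0 < t0 := by rw [ht0def]; positivity
  have hi11 : ⟪η.1, η.1⟫ = t0 := by rw [ht0def]; exact real_inner_self_eq_norm_sq _
  have hi13 : ⟪η.1, η.2.2⟫ = r := by rw [hrdef]; exact real_inner_comm _ _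
  -- Gram--Schmidt
  set u2 : E3 := η.2.1 - (p/t0) • η.1 with hu2def
  have ho12 : ⟪η.1, u2⟫ = 0 := by
    simp only [hu2def, inner_sub_right, real_inner_smul_right, hi11, ← hpdef]
    field_simp
    ring
  have ho21 : ⟪u2, η.1⟫ = 0 := by rw [real_inner_comm]; exact ho12
  have hu2ne : u2 ≠ 0 := by
    intro h
    apply hη
    have hc : ∀ i : Fin 3, η.2.1 i = (p/t0) * η.1 i := by
      intro i
      have h2 : η.2.1 = (p/t0) • η.1 := by
        have := sub_eq_zero.1 (hu2def ▸ h)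
        exact this
      rw [h2]
      rfl
    rw [phi_eq, hc 0, hc 1, hc 2]; ring
  set nu2 : ℝ := ‖u2‖ with hnu2def
  have hnu2 : nu2 ≠ 0 := by rw [hnu2def]; exact norm_ne_zero_iff.2 hu2ne
  have hu2self : ⟪u2, u2⟫ = nu2^2 := by rw [hnu2def]; exact real_inner_self_eq_norm_sq _
  have hi12u : ⟪u2, η.2.1⟫ = nu2^2 := by
    have : ⟪u2, η.2.1⟫ = ⟪u2, u2 + (p/t0) • η.1⟫ := by
      congr 1
      rw [hu2def]; abel
    rw [this, inner_add_right, real_inner_smul_right, ho21, hu2self]; ring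
  set w : ℝ := ⟪u2, η.2.2⟫ with hwdef
  have hw : w * t0 = q * t0 - p * r := by
    rw [hwdef, hu2def, inner_sub_left, real_inner_smul_left, ← hqdef, hi13]
    field_simp
  set u3 : E3 := η.2.2 - (r/t0) • η.1 - (w/nu2^2) • u2 with hu3def
  have ho13 : ⟪η.1, u3⟫ = 0 := by
    simp only [hu3def, inner_sub_right, real_inner_smul_right, hi11, hi13, ho12]
    field_simp
    ring
  have ho23 : ⟪u2, u3⟫ = 0 := by
    simp only [hu3def, inner_sub_right, real_inner_smul_right, ho21, hu2self, ← hwdef]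
    field_simp
    ring
  have hu3ne : u3 ≠ 0 := by
    intro h
    apply hη
    have h2 : η.2.2 = ((r/t0) - (w/nu2^2) * (p/t0)) • η.1 + (w/nu2^2) • η.2.1 := by
      have h3 : η.2.2 = (r/t0) • η.1 + (w/nu2^2) • u2 := by
        have h0 : η.2.2 - (r/t0) • η.1 - (w/nu2^2) • u2 = 0 := by rw [← hu3def]; exact h
        rw [sub_sub] at h0
        exact sub_eq_zero.1 h0
      rw [h3, hu2def]
      simp only [smul_sub, sub_smul, smul_smul]
      abel
    have hc : ∀ i : Fin 3, η.2.2 i = ((r/t0) - (w/nu2^2) * (p/t0)) * η.1 i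
        + (w/nu2^2) * η.2.1 i := by
      intro i; rw [h2]; rfl
    rw [phi_eq, hc 0, hc 1, hc 2]; ring
  set nu3 : ℝ := ‖u3‖ with hnu3def
  have hnu3 : nu3 ≠ 0 := by rw [hnu3def]; exact norm_ne_zero_iff.2 hu3ne
  have hu3self : ⟪u3, u3⟫ = nu3^2 := by rw [hnu3def]; exact real_inner_self_eq_norm_sq _
  -- the orthonormal frame
  set e1 : E3 := (‖η.1‖)⁻¹ • η.1 with he1def
  set e2 : E3 := nu2⁻¹ • u2 with he2def
  set e3 : E3 := nu3⁻¹ • u3 with he3def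
  have he11 : ⟪e1, e1⟫ = 1 := by
    simp only [he1def, real_inner_smul_left, real_inner_smul_right, hi11, ht0def]
    field_simp
  have he22 : ⟪e2, e2⟫ = 1 := by
    simp only [he2def, real_inner_smul_left, real_inner_smul_right, hu2self]
    field_simp
  have he33 : ⟪e3, e3⟫ = 1 := by
    simp only [he3def, real_inner_smul_left, real_inner_smul_right, hu3self]
    field_simp
  have he12 : ⟪e1, e2⟫ = 0 := by
    simp only [he1def, he2def, real_inner_smul_left, real_inner_smul_right, ho12, mul_zero]
  have he13 : ⟪e1, e3⟫ = 0 := by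
    simp only [he1def, he3def, real_inner_smul_left, real_inner_smul_right, ho13, mul_zero]
  have he23 : ⟪e2, e3⟫ = 0 := by
    simp only [he2def, he3def, real_inner_smul_left, real_inner_smul_right, ho23, mul_zero]
  have he21 : ⟪e2, e1⟫ = 0 := by rw [real_inner_comm]; exact he12
  have he31 : ⟪e3, e1⟫ = 0 := by rw [real_inner_comm]; exact he13
  have he32 : ⟪e3, e2⟫ = 0 := by rw [real_inner_comm]; exact he23
  have combo : ∀ x1 x2 x3 y1 y2 y3 : ℝ,
      ⟪x1 • e1 + x2 • e2 + x3 • e3, y1 • e1 + y2 • e2 + y3 • e3⟫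
        = x1*y1 + x2*y2 + x3*y3 := by
    intro x1 x2 x3 y1 y2 y3
    simp only [inner_add_left, inner_add_right, real_inner_smul_left, real_inner_smul_right,
      he11, he12, he13, he21, he22, he23, he31, he32, he33]
    ring

  -- decompositions of η and scalar relations
  have hdec2 : η.2.1 = (p/t0) • η.1 + u2 := by rw [hu2def]; abel
  have hdec3 : η.2.2 = (r/t0) • η.1 + (w/nu2^2) • u2 + u3 := by rw [hu3def]; abel
  have hi22 : ⟪η.2.1, η.2.1⟫ = n2 := by rw [hn2def]; exact real_inner_self_eq_norm_sq _
  have hi33 : ⟪η.2.2, η.2.2⟫ = n3 := by rw [hn3def]; exact real_inner_self_eq_norm_sq _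
  have ho31 : ⟪u3, η.1⟫ = 0 := by rw [real_inner_comm]; exact ho13
  have ho32 : ⟪u3, u2⟫ = 0 := by rw [real_inner_comm]; exact ho23
  have hE1 : n2 * t0 = p^2 + nu2^2 * t0 := by
    have h0 : n2 = ⟪η.2.1, η.2.1⟫ := hi22.symm
    rw [h0]
    conv_lhs => rw [hdec2]
    simp only [inner_add_left, inner_add_right, real_inner_smul_left, real_inner_smul_right,
      hi11, ho12, ho21, hu2self]
    field_simp
    ring
  have hE3 : n3 * (t0 * nu2^2) = r^2 * nu2^2 + w^2 * t0 + nu3^2 * (t0 * nu2^2) := by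
    have h0 : n3 = ⟪η.2.2, η.2.2⟫ := hi33.symm
    rw [h0]
    conv_lhs => rw [hdec3]
    simp only [inner_add_left, inner_add_right, real_inner_smul_left, real_inner_smul_right,
      hi11, ho12, ho21, ho13, ho23, ho31, ho32, hu2self, hu3self]
    field_simp
    ring
  -- values at t0
  have hf2t0 : f2f t0 n2 p t0 = nu2^2 * t0 := by
    unfold f2f g2f
    linear_combination hE1
  have hf2t0pos : 0 < f2f t0 n2 p t0 := by
    rw [hf2t0]
    have := (norm_pos_iff.2 hu2ne)
    rw [← hnu2def] at this
    positivity
  have hDt0 : Df t0 n2 n3 p q r t0 = Phi η ^ 2 := by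
    rw [phi_sq, hi11, ← hpdef, ← hqdef, ← hrdef, hi22, hi33]
    unfold Df g2f g3f
    ring
  have hDt0pos : 0 < Df t0 n2 n3 p q r t0 := by
    rw [hDt0]
    exact lt_of_le_of_ne (sq_nonneg _) (Ne.symm (pow_ne_zero 2 hη))
  -- the critical parameter
  set K : Set ℝ :=
    Set.Icc 0 t0 ∩ {s | s * f2f t0 n2 p s * Df t0 n2 n3 p q r s = 0} with hKdef
  have hK0 : (0:ℝ) ∈ K := ⟨⟨le_refl 0, ht0.le⟩, by simp⟩
  have hPcont : Continuous (fun s => s * f2f t0 n2 p s * Df t0 n2 n3 p q r s) := by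
    have := continuous_f2f t0 n2 p
    have := continuous_Df t0 n2 n3 p q r
    fun_prop
  have hKclosed : IsClosed K :=
    isClosed_Icc.inter (isClosed_eq hPcont continuous_const)
  have hKcpt : IsCompact K :=
    isCompact_Icc.of_isClosed_subset hKclosed Set.inter_subset_left
  set tstar : ℝ := sSup K with htsdef
  have htsK : tstar ∈ K := hKcpt.sSup_mem ⟨0, hK0⟩
  have hts0 : 0 ≤ tstar := htsK.1.1
  have htslt : tstar < t0 := by
    rcases htsK.1.2.lt_or_eq with h | h
    · exact h
    · exfalso
      have h2 := htsK.2
      rw [h] at h2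
      simp only [Set.mem_setOf_eq] at h2
      exact (mul_pos (mul_pos ht0 hf2t0pos) hDt0pos).ne' h2
  have hKbdd : BddAbove K := hKcpt.bddAbove
  have hPne : ∀ s ∈ Set.Ioc tstar t0, s * f2f t0 n2 p s * Df t0 n2 n3 p q r s ≠ 0 := by
    intro s hsm hz
    have hsK : s ∈ K := ⟨⟨hts0.trans hsm.1.le, hsm.2⟩, hz⟩
    exact absurd (le_csSup hKbdd hsK) (not_le.2 hsm.1)
  have hvalid : ∀ t ∈ Set.Ioc tstar t0,
      0 < t ∧ 0 < f2f t0 n2 p t ∧ 0 < Df t0 n2 n3 p q r t := by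
    intro t htm
    have htpos : 0 < t := lt_of_le_of_lt hts0 htm.1
    have hsub : Set.Icc t t0 ⊆ Set.Ioc tstar t0 :=
      fun s hs => ⟨lt_of_lt_of_le htm.1 hs.1, hs.2⟩
    refine ⟨htpos, ?_, ?_⟩
    · refine pos_left_of_pos_right htm.2 ((continuous_f2f t0 n2 p).continuousOn)
        (fun s hs h0 => ?_) hf2t0pos
      exact hPne s (hsub hs) (by rw [h0]; ring)
    · refine pos_left_of_pos_right htm.2 ((continuous_Df t0 n2 n3 p q r).continuousOn)
        (fun s hs h0 => ?_) hDt0pos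
      exact hPne s (hsub hs) (by rw [h0]; ring)

  -- the deformation family
  set A : ℝ → E3 × E3 × E3 := fun t =>
    (Real.sqrt t • e1 + (0:ℝ) • e2 + (0:ℝ) • e3,
     (p / Real.sqrt t) • e1 + (Real.sqrt (f2f t0 n2 p t) / Real.sqrt t) • e2 + (0:ℝ) • e3,
     (r / Real.sqrt t) • e1
       + ((q*t - p*r) / (Real.sqrt t * Real.sqrt (f2f t0 n2 p t))) • e2
       + (Real.sqrt (Df t0 n2 n3 p q r t) / Real.sqrt (f2f t0 n2 p t)) • e3) with hAdef
  have hgram : ∀ t, 0 < t → 0 < f2f t0 n2 p t → 0 < Df t0 n2 n3 p q r t →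
      ⟪(A t).1,(A t).1⟫ = t ∧ ⟪(A t).1,(A t).2.1⟫ = p ∧ ⟪(A t).2.2,(A t).1⟫ = r ∧
      ⟪(A t).2.1,(A t).2.1⟫ = g2f t0 n2 t ∧ ⟪(A t).2.1,(A t).2.2⟫ = q ∧
      ⟪(A t).2.2,(A t).2.2⟫ = g3f t0 n3 t := by
    intro t ht hf2 hD
    have hx2 : Real.sqrt t ^ 2 = t := Real.sq_sqrt ht.le
    have hxne : Real.sqrt t ≠ 0 := (Real.sqrt_pos.2 ht).ne'
    have hs22 : Real.sqrt (f2f t0 n2 p t) ^ 2 = f2f t0 n2 p t := Real.sq_sqrt hf2.le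
    have hs2ne : Real.sqrt (f2f t0 n2 p t) ≠ 0 := (Real.sqrt_pos.2 hf2).ne'
    have hsD2 : Real.sqrt (Df t0 n2 n3 p q r t) ^ 2 = Df t0 n2 n3 p q r t :=
      Real.sq_sqrt hD.le
    simp only [hAdef]
    refine ⟨?_, ?_, ?_, ?_, ?_, ?_⟩
    · rw [combo]; linear_combination hx2
    · rw [combo]; field_simp; ring
    · rw [combo]; field_simp; ring
    · rw [combo]; field_simp; simp only [hs22, hx2]; unfold f2f g2f; ring
    · rw [combo]; field_simp
      linear_combination (-(q * Real.sqrt (f2f t0 n2 p t))) * hx2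
    · rw [combo]; field_simp; simp only [hsD2, hs22, hx2]
      unfold Df f2f g2f g3f; ring

  have hphisq : ∀ t ∈ Set.Ioc tstar t0, Phi (A t) ^ 2 = Df t0 n2 n3 p q r t := by
    intro t htm
    obtain ⟨ht, hf2, hD⟩ := hvalid t htm
    obtain ⟨g11, g12, g31, g22, g23, g33⟩ := hgram t ht hf2 hD
    rw [phi_sq, g11, g12, g31, g22, g23, g33]
    unfold Df
    ring
  have hPhiAne : ∀ t ∈ Set.Ioc tstar t0, Phi (A t) ≠ 0 := by
    intro t htm h0
    have := hphisq t htm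
    rw [h0] at this
    exact (hvalid t htm).2.2.ne' (by linarith [this])
  have hcas : ∀ t ∈ Set.Ioc tstar t0, casimir (A t) = casimir η := by
    intro t htm
    obtain ⟨ht, hf2, hD⟩ := hvalid t htm
    obtain ⟨g11, g12, g31, g22, g23, g33⟩ := hgram t ht hf2 hD
    have hn1A : ‖(A t).1‖^2 = t := by rw [← real_inner_self_eq_norm_sq, g11]
    have hn2A : ‖(A t).2.1‖^2 = g2f t0 n2 t := by rw [← real_inner_self_eq_norm_sq, g22]
    have hn3A : ‖(A t).2.2‖^2 = g3f t0 n3 t := by rw [← real_inner_self_eq_norm_sq, g33]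
    unfold casimir
    rw [g12, g23, g31, hn1A, hn2A, hn3A, ← hpdef, ← hqdef, ← hrdef, ← ht0def, ← hn2def,
      ← hn3def]
    funext i
    fin_cases i <;> simp [g2f, g3f] <;> ring

  -- A t0 recovers η
  have hnu2nn : 0 ≤ nu2 := by rw [hnu2def]; exact norm_nonneg _
  have hnu3nn : 0 ≤ nu3 := by rw [hnu3def]; exact norm_nonneg _
  have hxq : Real.sqrt t0 = ‖η.1‖ := by rw [ht0def]; exact Real.sqrt_sq (norm_nonneg _)
  have hs2t0 : Real.sqrt (f2f t0 n2 p t0) = ‖η.1‖ * nu2 := by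
    rw [hf2t0, ht0def]
    rw [show nu2^2 * ‖η.1‖^2 = (‖η.1‖*nu2)^2 by ring]
    exact Real.sqrt_sq (by positivity)
  have hwe : w = (q*t0 - p*r)/t0 := by field_simp; linarith [hw]
  have hn2e : n2 = (p^2 + nu2^2*t0)/t0 := by field_simp; linarith [hE1]
  have hn3e : n3 = (r^2*nu2^2 + w^2*t0 + nu3^2*(t0*nu2^2))/(t0*nu2^2) := by
    field_simp
    linarith [hE3]
  have hDt0e3 : Df t0 n2 n3 p q r t0 = f2f t0 n2 p t0 * nu3^2 := by
    unfold Df f2f g2f g3f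
    rw [hn3e, hwe, hn2e]
    field_simp
    ring
  have hsDt0 : Real.sqrt (Df t0 n2 n3 p q r t0) = Real.sqrt (f2f t0 n2 p t0) * nu3 := by
    rw [hDt0e3, show f2f t0 n2 p t0 * nu3^2 = (Real.sqrt (f2f t0 n2 p t0) * nu3)^2 by
      rw [mul_pow, Real.sq_sqrt hf2t0pos.le]]
    exact Real.sqrt_sq (by positivity)
  have hs2t0ne : Real.sqrt (f2f t0 n2 p t0) ≠ 0 := (Real.sqrt_pos.2 hf2t0pos).ne'
  have hAt0 : A t0 = η := by
    have h1 : (A t0).1 = η.1 := by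
      show Real.sqrt t0 • e1 + (0:ℝ) • e2 + (0:ℝ) • e3 = η.1
      rw [hxq, he1def, smul_smul, mul_inv_cancel₀ hnrm1, one_smul, zero_smul, zero_smul,
        add_zero, add_zero]
    have h2 : (A t0).2.1 = η.2.1 := by
      show (p / Real.sqrt t0) • e1 + (Real.sqrt (f2f t0 n2 p t0) / Real.sqrt t0) • e2
          + (0:ℝ) • e3 = η.2.1
      rw [hxq, hs2t0, he1def, he2def, smul_smul, smul_smul, zero_smul, add_zero]
      have hc1 : p / ‖η.1‖ * ‖η.1‖⁻¹ = p / t0 := by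
        rw [ht0def]; field_simp
      have hc2 : ‖η.1‖ * nu2 / ‖η.1‖ * nu2⁻¹ = 1 := by field_simp
      rw [hc1, hc2, one_smul, hdec2]
    have h3 : (A t0).2.2 = η.2.2 := by
      show (r / Real.sqrt t0) • e1
          + ((q*t0 - p*r) / (Real.sqrt t0 * Real.sqrt (f2f t0 n2 p t0))) • e2
          + (Real.sqrt (Df t0 n2 n3 p q r t0) / Real.sqrt (f2f t0 n2 p t0)) • e3 = η.2.2
      rw [hxq, hsDt0, hs2t0, he1def, he2def, he3def, smul_smul, smul_smul, smul_smul]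
      have hc1 : r / ‖η.1‖ * ‖η.1‖⁻¹ = r / t0 := by
        rw [ht0def]; field_simp
      have hc2 : (q*t0 - p*r) / (‖η.1‖ * (‖η.1‖ * nu2)) * nu2⁻¹ = w / nu2^2 := by
        rw [hwe, ht0def]
        field_simp
      have hc3 : ‖η.1‖ * nu2 * nu3 / (‖η.1‖ * nu2) * nu3⁻¹ = 1 := by
        field_simp
      rw [hc1, hc2, hc3, one_smul, hdec3]
    exact Prod.ext h1 (Prod.ext h2 h3)
  -- continuity of the family
  have hAcont : ContinuousOn A (Set.Ioc tstar t0) := by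
    have hsq : ContinuousOn Real.sqrt (Set.Ioc tstar t0) := Real.continuous_sqrt.continuousOn
    have hf2c : ContinuousOn (fun s => Real.sqrt (f2f t0 n2 p s)) (Set.Ioc tstar t0) :=
      (Real.continuous_sqrt.comp (continuous_f2f t0 n2 p)).continuousOn
    have hDc : ContinuousOn (fun s => Real.sqrt (Df t0 n2 n3 p q r s)) (Set.Ioc tstar t0) :=
      (Real.continuous_sqrt.comp (continuous_Df t0 n2 n3 p q r)).continuousOn
    have hxne : ∀ s ∈ Set.Ioc tstar t0, Real.sqrt s ≠ 0 :=
      fun s hs => (Real.sqrt_pos.2 (hvalid s hs).1).ne'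
    have hs2ne : ∀ s ∈ Set.Ioc tstar t0, Real.sqrt (f2f t0 n2 p s) ≠ 0 :=
      fun s hs => (Real.sqrt_pos.2 (hvalid s hs).2.1).ne'
    rw [hAdef]
    refine ContinuousOn.prodMk ?_ (ContinuousOn.prodMk ?_ ?_)
    · exact ((hsq.smul continuousOn_const).add continuousOn_const).add continuousOn_const
    · exact (((continuousOn_const.div hsq hxne).smul continuousOn_const).add
        ((hf2c.div hsq hxne).smul continuousOn_const)).add continuousOn_const
    · refine ContinuousOn.add (ContinuousOn.add ?_ ?_) ?_
      · exact (continuousOn_const.div hsq hxne).smul continuousOn_const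
      · refine (ContinuousOn.div (by fun_prop) (hsq.mul hf2c) ?_).smul continuousOn_const
        exact fun s hs => mul_ne_zero (hxne s hs) (hs2ne s hs)
      · exact (hDc.div hf2c hs2ne).smul continuousOn_const
  -- membership in the leaf
  have hAleaf : ∀ t ∈ Set.Ioc tstar t0, A t ∈ leaf η := by
    intro t htm
    refine ⟨hcas t htm, ?_⟩
    have hsub : Set.Icc t t0 ⊆ Set.Ioc tstar t0 :=
      fun s hs => ⟨lt_of_lt_of_le htm.1 hs.1, hs.2⟩
    have hsgn := sign_eq_of_nonzero htm.2
      (continuous_phi.comp_continuousOn (hAcont.mono hsub))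
      (fun s hs => hPhiAne s (hsub hs))
    simpa [hAt0] using hsgn

  -- approximating sequence decreasing to tstar
  set tn : ℕ → ℝ := fun n => tstar + (t0 - tstar)/((n:ℝ)+1) with htndef
  have hgap : 0 < t0 - tstar := sub_pos.2 htslt
  have htn_mem : ∀ n : ℕ, tn n ∈ Set.Ioc tstar t0 := by
    intro n
    constructor
    · have h1 : 0 < (t0 - tstar)/((n:ℝ)+1) := by positivity
      simp only [htndef]
      linarith
    · have h1 : (t0 - tstar)/((n:ℝ)+1) ≤ t0 - tstar := by
        apply div_le_self hgap.le
        have : (0:ℝ) ≤ (n:ℝ) := Nat.cast_nonneg n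
        linarith
      simp only [htndef]
      linarith
  have htn_tendsto : Filter.Tendsto tn Filter.atTop (nhds tstar) := by
    have h0 : Filter.Tendsto (fun n : ℕ => (t0 - tstar) * (1/((n:ℝ)+1)))
        Filter.atTop (nhds ((t0 - tstar) * 0)) :=
      tendsto_one_div_add_atTop_nhds_zero_nat.const_mul _
    have h1 : Filter.Tendsto (fun n : ℕ => tstar + (t0 - tstar) * (1/((n:ℝ)+1)))
        Filter.atTop (nhds (tstar + (t0 - tstar) * 0)) :=
      tendsto_const_nhds.add h0
    simp only [mul_zero, add_zero] at h1
    have h2 : tn = fun n : ℕ => tstar + (t0 - tstar) * (1/((n:ℝ)+1)) := by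
      funext n
      simp only [htndef, mul_one_div]
    rw [h2]
    exact h1
  -- boundedness of the family
  set R : ℝ := Real.sqrt t0 + Real.sqrt n2 + Real.sqrt n3 with hRdef
  have hn2nn : (0:ℝ) ≤ n2 := by rw [hn2def]; positivity
  have hn3nn : (0:ℝ) ≤ n3 := by rw [hn3def]; positivity
  have hbound : ∀ n : ℕ, A (tn n) ∈ Metric.closedBall (0 : E3 × E3 × E3) R := by
    intro n
    obtain ⟨ht, hf2, hD⟩ := hvalid _ (htn_mem n)
    obtain ⟨g11, g12, g31, g22, g23, g33⟩ := hgram _ ht hf2 hD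
    set t := tn n
    have htle : t ≤ t0 := (htn_mem n).2
    have hb1 : ‖(A t).1‖ ≤ Real.sqrt t0 := by
      have h1 : ‖(A t).1‖ = Real.sqrt (‖(A t).1‖^2) := (Real.sqrt_sq (norm_nonneg _)).symm
      rw [h1, ← real_inner_self_eq_norm_sq, g11]
      exact Real.sqrt_le_sqrt htle
    have hb2 : ‖(A t).2.1‖ ≤ Real.sqrt n2 := by
      have h1 : ‖(A t).2.1‖ = Real.sqrt (‖(A t).2.1‖^2) := (Real.sqrt_sq (norm_nonneg _)).symm
      rw [h1, ← real_inner_self_eq_norm_sq, g22]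
      apply Real.sqrt_le_sqrt
      unfold g2f
      linarith
    have hb3 : ‖(A t).2.2‖ ≤ Real.sqrt n3 := by
      have h1 : ‖(A t).2.2‖ = Real.sqrt (‖(A t).2.2‖^2) := (Real.sqrt_sq (norm_nonneg _)).symm
      rw [h1, ← real_inner_self_eq_norm_sq, g33]
      apply Real.sqrt_le_sqrt
      unfold g3f
      linarith
    have hs1 : (0:ℝ) ≤ Real.sqrt t0 := Real.sqrt_nonneg _
    have hs2 : (0:ℝ) ≤ Real.sqrt n2 := Real.sqrt_nonneg _
    have hs3 : (0:ℝ) ≤ Real.sqrt n3 := Real.sqrt_nonneg _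
    rw [mem_closedBall_zero_iff]
    have hnorm : ‖A t‖ = max ‖(A t).1‖ (max ‖(A t).2.1‖ ‖(A t).2.2‖) := by
      rw [Prod.norm_def, Prod.norm_def]
    rw [hnorm, hRdef]
    apply max_le (by linarith) (max_le (by linarith) (by linarith))
  -- extract a convergent subsequence
  obtain ⟨μ, hμball, φ, hφmono, hφtend⟩ :=
    tendsto_subseq_of_bounded (Metric.isBounded_closedBall (x := (0 : E3 × E3 × E3)) (r := R))
      hbound
  refine ⟨μ, ?_, ?_⟩
  · exact mem_closure_of_tendsto hφtend
      (Filter.Eventually.of_forall (fun n => hAleaf _ (htn_mem (φ n))))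
  · -- Phi μ = 0
    have htφ : Filter.Tendsto (fun n => tn (φ n)) Filter.atTop (nhds tstar) :=
      htn_tendsto.comp hφmono.tendsto_atTop
    have hDlimφ : Filter.Tendsto (fun n => Df t0 n2 n3 p q r (tn (φ n))) Filter.atTop
        (nhds (Df t0 n2 n3 p q r tstar)) :=
      ((continuous_Df t0 n2 n3 p q r).tendsto tstar).comp htφ
    have hPhilim : Filter.Tendsto (fun n => Phi (A (tn (φ n))) ^ 2) Filter.atTop
        (nhds (Phi μ ^ 2)) := ((continuous_phi.tendsto μ).comp hφtend).pow 2
    have heq : (fun n => Phi (A (tn (φ n))) ^ 2)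
        = fun n => Df t0 n2 n3 p q r (tn (φ n)) :=
      funext fun n => hphisq _ (htn_mem (φ n))
    rw [heq] at hPhilim
    have hPhimu : Phi μ ^ 2 = Df t0 n2 n3 p q r tstar :=
      tendsto_nhds_unique hPhilim hDlimφ
    -- nonnegativity of the limits
    have hDlim : Filter.Tendsto (fun n => Df t0 n2 n3 p q r (tn n)) Filter.atTop
        (nhds (Df t0 n2 n3 p q r tstar)) :=
      ((continuous_Df t0 n2 n3 p q r).tendsto tstar).comp htn_tendsto
    have hDnn : 0 ≤ Df t0 n2 n3 p q r tstar :=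
      ge_of_tendsto hDlim (Filter.Eventually.of_forall fun n => (hvalid _ (htn_mem n)).2.2.le)
    have hf2lim : Filter.Tendsto (fun n => f2f t0 n2 p (tn n)) Filter.atTop
        (nhds (f2f t0 n2 p tstar)) :=
      ((continuous_f2f t0 n2 p).tendsto tstar).comp htn_tendsto
    have hf2nn : 0 ≤ f2f t0 n2 p tstar :=
      ge_of_tendsto hf2lim (Filter.Eventually.of_forall fun n => (hvalid _ (htn_mem n)).2.1.le)
    have hg2cont : Continuous (g2f t0 n2) := by unfold g2f; fun_prop
    have hg2nn : 0 ≤ g2f t0 n2 tstar := by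
      refine ge_of_tendsto ((hg2cont.tendsto tstar).comp htn_tendsto)
        (Filter.Eventually.of_forall fun n => ?_)
      have h1 := (hvalid _ (htn_mem n)).1
      have h2 := (hvalid _ (htn_mem n)).2.1
      unfold f2f at h2
      show (0:ℝ) ≤ g2f t0 n2 (tn n)
      by_contra hcon
      push_neg at hcon
      have h3 : tn n * g2f t0 n2 (tn n) < 0 := mul_neg_of_pos_of_neg h1 hcon
      have h4 := sq_nonneg p
      linarith
    -- the determinant vanishes at tstar
    have key : f2f t0 n2 p tstar = 0 → Df t0 n2 n3 p q r tstar = 0 := by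
      intro hf2z
      have hiden : Df t0 n2 n3 p q r tstar * g2f t0 n2 tstar
          = f2f t0 n2 p tstar * (g2f t0 n2 tstar * g3f t0 n3 tstar - q^2)
            - (p*q - g2f t0 n2 tstar * r)^2 := by
        unfold Df f2f g2f g3f
        ring
      rw [hf2z, zero_mul, zero_sub] at hiden
      rcases hg2nn.eq_or_lt' with hg2z | hg2pos
      · have hp0 : p = 0 := by
          have h1 : f2f t0 n2 p tstar = tstar * g2f t0 n2 tstar - p^2 := by unfold f2f; rfl
          rw [hf2z, hg2z] at h1
          have h5 : p^2 = 0 := by linear_combination h1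
          exact pow_eq_zero_iff (two_ne_zero) |>.1 h5
        have hg2z' : tstar + n2 - t0 = 0 := by
          have h6 : g2f t0 n2 tstar = tstar + n2 - t0 := rfl
          rw [← h6]
          exact hg2z
        have hexp : Df t0 n2 n3 p q r tstar = -(tstar * q^2) := by
          unfold Df g2f g3f
          rw [hp0]
          linear_combination (tstar * (tstar + n3 - t0) - r^2) * hg2z'
        have hDle : Df t0 n2 n3 p q r tstar ≤ 0 := by
          rw [hexp]
          exact neg_nonpos.2 (mul_nonneg hts0 (sq_nonneg q))
        exact le_antisymm hDle hDnn
      · have hDle : Df t0 n2 n3 p q r tstar ≤ 0 := by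
          have h1 : Df t0 n2 n3 p q r tstar * g2f t0 n2 tstar ≤ 0 := by
            rw [hiden]
            exact neg_nonpos.2 (sq_nonneg _)
          by_contra hc
          push_neg at hc
          exact absurd h1 (not_le.2 (mul_pos hc hg2pos))
        exact le_antisymm hDle hDnn
    have hDz : Df t0 n2 n3 p q r tstar = 0 := by
      have hprod := htsK.2
      simp only [Set.mem_setOf_eq] at hprod
      rcases mul_eq_zero.1 hprod with h | h
      · rcases mul_eq_zero.1 h with h1 | h2
        · apply key
          have hle : f2f t0 n2 p tstar ≤ 0 := by
            have : f2f t0 n2 p tstar = tstar * g2f t0 n2 tstar - p^2 := rfl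
            rw [this, h1, zero_mul, zero_sub]
            exact neg_nonpos.2 (sq_nonneg p)
          exact le_antisymm hle hf2nn
        · exact key h2
      · exact h
    have hsq0 : Phi μ ^ 2 = 0 := by rw [hPhimu, hDz]
    exact pow_eq_zero_iff (two_ne_zero) |>.1 hsq0

end
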